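/- arXiv:math/0602479 — 2 statements merged into one kernel-verified Lean document; each statement's English description precedes it below -/
import Mathlib

section
/- Let P be a Markov kernel on a measurable space X satisfying the Doeblin condition P(x,·) ≥ δν for a probability measure ν and some δ > 0. Then the map μ ↦ P*μ is a contraction with constant (1 − δ) on the space of probability measures equipped with the total variation distance; consequently there exists a unique invariant probability measure μ⋆ with P*μ⋆ = μ⋆. -/
/-!
Subtracting the minorizing measure splits `P = δν + R`, with `R` a kernel of constant mass
`1 - δ`. The `δν` part does not depend on the initial law, so `P*μ₁ - P*μ₂ = R*μ₁ - R*μ₂`, and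
integrating a function with values in `[0, 1 - δ]` against `μ₁ - μ₂`, split along its Hahn
decomposition, costs at most `(1 - δ) ‖μ₁ - μ₂‖_TV`. The invariant law is the Neumann series
`μ⋆ = ∑ₙ Rⁿ(δν)`: it solves `μ⋆ = δν + R*μ⋆` and has mass `∑ₙ (1 - δ)ⁿ δ = 1`, hence
`P*μ⋆ = δν + R*μ⋆ = μ⋆`. Uniqueness follows from the contraction, as `δ > 0`.
-/

open MeasureTheory ProbabilityTheory

/-- Total variation distance between two measures, as the supremum over measurable sets of
the absolute difference of the (real-valued) measures. -/
noncomputable def tvDist {X : Type*} [MeasurableSpace X] (μ₁ μ₂ : Measure X) : ℝ :=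
  ⨆ s : {s : Set X // MeasurableSet s}, |(μ₁ s).toReal - (μ₂ s).toReal|

open Set
open scoped ENNReal

section TotalVariation

variable {X : Type*} [MeasurableSpace X] {μ₁ μ₂ : Measure X}

lemma abs_toReal_sub_le_tvDist [IsFiniteMeasure μ₁] [IsFiniteMeasure μ₂] {s : Set X}
    (hs : MeasurableSet s) : |(μ₁ s).toReal - (μ₂ s).toReal| ≤ tvDist μ₁ μ₂ := by
  refine le_ciSup
    (f := fun t : {t : Set X // MeasurableSet t} ↦ |(μ₁ t).toReal - (μ₂ t).toReal|)
    ⟨(μ₁ univ).toReal + (μ₂ univ).toReal, ?_⟩ ⟨s, hs⟩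
  rintro _ ⟨t, rfl⟩
  have h₁ := ENNReal.toReal_mono (measure_ne_top μ₁ univ) (measure_mono (subset_univ t.1))
  have h₂ := ENNReal.toReal_mono (measure_ne_top μ₂ univ) (measure_mono (subset_univ t.1))
  have : 0 ≤ (μ₁ t).toReal := ENNReal.toReal_nonneg
  have : 0 ≤ (μ₂ t).toReal := ENNReal.toReal_nonneg
  exact abs_sub_le_iff.2 ⟨by linarith, by linarith⟩

lemma tvDist_nonneg [IsFiniteMeasure μ₁] [IsFiniteMeasure μ₂] : 0 ≤ tvDist μ₁ μ₂ :=
  (abs_nonneg _).trans (abs_toReal_sub_le_tvDist MeasurableSet.empty)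

lemma tvDist_le_of_forall {b : ℝ}
    (h : ∀ s, MeasurableSet s → |(μ₁ s).toReal - (μ₂ s).toReal| ≤ b) : tvDist μ₁ μ₂ ≤ b :=
  have : Nonempty {s : Set X // MeasurableSet s} := ⟨⟨∅, .empty⟩⟩
  ciSup_le fun s ↦ h s.1 s.2

lemma tvDist_comm : tvDist μ₁ μ₂ = tvDist μ₂ μ₁ := by
  simp only [tvDist, abs_sub_comm]

lemma tvDist_add_left (ρ : Measure X) [IsFiniteMeasure ρ] [IsFiniteMeasure μ₁]
    [IsFiniteMeasure μ₂] : tvDist (ρ + μ₁) (ρ + μ₂) = tvDist μ₁ μ₂ := by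
  simp only [tvDist, Measure.add_apply,
    ENNReal.toReal_add (measure_ne_top _ _) (measure_ne_top _ _), add_sub_add_left_eq_sub]

lemma eq_of_tvDist_eq_zero [IsFiniteMeasure μ₁] [IsFiniteMeasure μ₂] (h : tvDist μ₁ μ₂ = 0) :
    μ₁ = μ₂ := by
  ext s hs
  have hs' := abs_toReal_sub_le_tvDist (μ₁ := μ₁) (μ₂ := μ₂) hs
  rw [h, abs_nonpos_iff, sub_eq_zero] at hs'
  exact (ENNReal.toReal_eq_toReal_iff' (measure_ne_top _ _) (measure_ne_top _ _)).1 hs'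

lemma restrict_le_restrict_of_forall_subset {s : Set X} (hs : MeasurableSet s)
    (h : ∀ t, MeasurableSet t → t ⊆ s → μ₂ t ≤ μ₁ t) : μ₂.restrict s ≤ μ₁.restrict s :=
  Measure.le_iff.2 fun t ht ↦ by
    simpa only [Measure.restrict_apply ht] using h _ (ht.inter hs) inter_subset_right

lemma setLIntegral_le_setLIntegral_add_mul [IsFiniteMeasure μ₂] {s : Set X}
    (h : μ₂.restrict s ≤ μ₁.restrict s) {f : X → ℝ≥0∞} {c : ℝ≥0∞} (hf : ∀ x, f x ≤ c) :
    ∫⁻ x in s, f x ∂μ₁ ≤ ∫⁻ x in s, f x ∂μ₂ + c * (μ₁ s - μ₂ s) := by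
  set ρ := μ₁.restrict s - μ₂.restrict s
  calc ∫⁻ x in s, f x ∂μ₁ = ∫⁻ x, f x ∂ρ + ∫⁻ x in s, f x ∂μ₂ := by
        rw [← lintegral_add_measure, Measure.sub_add_cancel_of_le h]
    _ ≤ c * ρ univ + ∫⁻ x in s, f x ∂μ₂ := by
        gcongr
        exact (lintegral_mono hf).trans_eq (lintegral_const c)
    _ = ∫⁻ x in s, f x ∂μ₂ + c * (μ₁ s - μ₂ s) := by
        rw [Measure.sub_apply .univ h, Measure.restrict_apply_univ, Measure.restrict_apply_univ,
          add_comm]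

lemma lintegral_ne_top_of_le [IsFiniteMeasure μ₁] {f : X → ℝ≥0∞} {c : ℝ≥0∞} (hc : c ≠ ∞)
    (hf : ∀ x, f x ≤ c) : ∫⁻ x, f x ∂μ₁ ≠ ∞ :=
  ne_top_of_le_ne_top (by rw [lintegral_const]; exact ENNReal.mul_ne_top hc (measure_ne_top _ _))
    (lintegral_mono hf)

lemma toReal_lintegral_le_add_mul_tvDist [IsFiniteMeasure μ₁] [IsFiniteMeasure μ₂]
    {f : X → ℝ≥0∞} {c : ℝ≥0∞} (hc : c ≠ ∞) (hf : ∀ x, f x ≤ c) :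
    (∫⁻ x, f x ∂μ₁).toReal ≤ (∫⁻ x, f x ∂μ₂).toReal + c.toReal * tvDist μ₁ μ₂ := by
  obtain ⟨s, hs, hpos, hneg⟩ := hahn_decomposition μ₁ μ₂
  have hle : μ₂ s ≤ μ₁ s := hpos s hs subset_rfl
  have hint : ∫⁻ x, f x ∂μ₁ ≤ ∫⁻ x, f x ∂μ₂ + c * (μ₁ s - μ₂ s) :=
    calc ∫⁻ x, f x ∂μ₁ = ∫⁻ x in s, f x ∂μ₁ + ∫⁻ x in sᶜ, f x ∂μ₁ :=
          (lintegral_add_compl f hs).symm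
      _ ≤ (∫⁻ x in s, f x ∂μ₂ + c * (μ₁ s - μ₂ s)) + ∫⁻ x in sᶜ, f x ∂μ₂ :=
          add_le_add
            (setLIntegral_le_setLIntegral_add_mul
              (restrict_le_restrict_of_forall_subset hs hpos) hf)
            (lintegral_mono' (restrict_le_restrict_of_forall_subset hs.compl hneg) le_rfl)
      _ = ∫⁻ x, f x ∂μ₂ + c * (μ₁ s - μ₂ s) := by
          rw [← lintegral_add_compl f hs (μ := μ₂)]; ring
  have hexcess : c * (μ₁ s - μ₂ s) ≠ ∞ :=
    ENNReal.mul_ne_top hc (ENNReal.sub_ne_top (measure_ne_top _ _))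
  calc (∫⁻ x, f x ∂μ₁).toReal
      ≤ (∫⁻ x, f x ∂μ₂).toReal + c.toReal * ((μ₁ s).toReal - (μ₂ s).toReal) := by
        rw [← ENNReal.toReal_sub_of_le hle (measure_ne_top _ _), ← ENNReal.toReal_mul,
          ← ENNReal.toReal_add (lintegral_ne_top_of_le hc hf) hexcess]
        exact ENNReal.toReal_mono (ENNReal.add_ne_top.2 ⟨lintegral_ne_top_of_le hc hf, hexcess⟩)
          hint
    _ ≤ (∫⁻ x, f x ∂μ₂).toReal + c.toReal * tvDist μ₁ μ₂ := by
        gcongr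
        exact (le_abs_self _).trans (abs_toReal_sub_le_tvDist hs)

lemma abs_toReal_lintegral_sub_le_mul_tvDist [IsFiniteMeasure μ₁] [IsFiniteMeasure μ₂]
    {f : X → ℝ≥0∞} {c : ℝ≥0∞} (hc : c ≠ ∞) (hf : ∀ x, f x ≤ c) :
    |(∫⁻ x, f x ∂μ₁).toReal - (∫⁻ x, f x ∂μ₂).toReal| ≤ c.toReal * tvDist μ₁ μ₂ := by
  have h₁ := toReal_lintegral_le_add_mul_tvDist (μ₁ := μ₁) (μ₂ := μ₂) hc hf
  have h₂ := toReal_lintegral_le_add_mul_tvDist (μ₁ := μ₂) (μ₂ := μ₁) hc hf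
  rw [tvDist_comm] at h₂
  exact abs_sub_le_iff.2 ⟨by linarith, by linarith⟩

lemma tvDist_comp_le_mul {Y : Type*} [MeasurableSpace Y] [IsFiniteMeasure μ₁]
    [IsFiniteMeasure μ₂] (κ : Kernel X Y) {c : ℝ≥0∞} (hc : c ≠ ∞) (hκ : ∀ x, κ x univ ≤ c) :
    tvDist (κ ∘ₘ μ₁) (κ ∘ₘ μ₂) ≤ c.toReal * tvDist μ₁ μ₂ :=
  tvDist_le_of_forall fun s hs ↦ by
    rw [Measure.bind_apply hs κ.aemeasurable, Measure.bind_apply hs κ.aemeasurable]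
    exact abs_toReal_lintegral_sub_le_mul_tvDist hc
      fun x ↦ (measure_mono (subset_univ s)).trans (hκ x)

end TotalVariation

namespace ProbabilityTheory.Kernel

variable {α β : Type*} [MeasurableSpace α] [MeasurableSpace β]

section Residual

variable {κ : Kernel α β} {ρ : Measure β}

lemma measure_univ_le_one_of_forall_le [IsMarkovKernel κ] [Nonempty α] (h : ∀ a, ρ ≤ κ a) :
    ρ univ ≤ 1 := by
  simpa using h (Classical.arbitrary α) univ

noncomputable def residual (κ : Kernel α β) (ρ : Measure β) [IsFiniteMeasure ρ]
    (h : ∀ a, ρ ≤ κ a) : Kernel α β where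
  toFun a := κ a - ρ
  measurable' := Measure.measurable_of_measurable_coe _ fun s hs ↦ by
    simp_rw [Measure.sub_apply hs (h _)]
    exact (κ.measurable_coe hs).sub measurable_const

variable [IsFiniteMeasure ρ] {h : ∀ a, ρ ≤ κ a}

lemma residual_apply (a : α) : residual κ ρ h a = κ a - ρ := rfl

lemma const_add_residual : const α ρ + residual κ ρ h = κ := by
  ext1 a
  rw [add_apply, const_apply, residual_apply, add_comm, Measure.sub_add_cancel_of_le (h a)]

instance [IsFiniteKernel κ] : IsFiniteKernel (residual κ ρ h) :=
  isFiniteKernel_of_le fun _ ↦ Measure.sub_le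

lemma residual_apply_univ [IsMarkovKernel κ] (a : α) :
    residual κ ρ h a univ = 1 - ρ univ := by
  rw [residual_apply, Measure.sub_apply .univ (h a), measure_univ]

theorem tvDist_comp_le_of_forall_le [IsMarkovKernel κ] (h : ∀ a, ρ ≤ κ a)
    (μ₁ μ₂ : Measure α) [IsProbabilityMeasure μ₁] [IsProbabilityMeasure μ₂] :
    tvDist (κ ∘ₘ μ₁) (κ ∘ₘ μ₂) ≤ (1 - ρ univ).toReal * tvDist μ₁ μ₂ := by
  rw [← const_add_residual (h := h), Measure.add_comp, Measure.add_comp, Measure.const_comp,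
    Measure.const_comp, measure_univ, measure_univ, one_smul, tvDist_add_left]
  exact tvDist_comp_le_mul _ (ENNReal.sub_ne_top ENNReal.one_ne_top)
    fun a ↦ (residual_apply_univ a).le

end Residual

section Iterates

lemma pow_succ_comp (κ : Kernel α α) (ρ : Measure α) (n : ℕ) :
    (κ ^ (n + 1)) ∘ₘ ρ = κ ∘ₘ ((κ ^ n) ∘ₘ ρ) := by
  rw [Measure.comp_assoc, pow_succ']
  rfl

lemma sum_pow_comp_eq_add_comp (κ : Kernel α α) (ρ : Measure α) :
    Measure.sum (fun n : ℕ ↦ (κ ^ n) ∘ₘ ρ) =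
      ρ + κ ∘ₘ Measure.sum (fun n : ℕ ↦ (κ ^ n) ∘ₘ ρ) := by
  rw [Measure.bind_sum _ _ κ.aemeasurable]
  ext s hs
  rw [Measure.sum_apply _ hs, Measure.add_apply, Measure.sum_apply _ hs,
    tsum_eq_zero_add' ENNReal.summable, pow_zero,
    show (1 : Kernel α α) ∘ₘ ρ = ρ from Measure.id_comp]
  simp_rw [pow_succ_comp]

variable {κ : Kernel α α} {ρ : Measure α}

lemma pow_comp_apply_univ {e : ℝ≥0∞} (hκ : ∀ a, κ a univ = e) (n : ℕ) :
    ((κ ^ n) ∘ₘ ρ) univ = e ^ n * ρ univ := by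
  induction n with
  | zero => rw [pow_zero, pow_zero, one_mul, show (1 : Kernel α α) ∘ₘ ρ = ρ from Measure.id_comp]
  | succ n ih =>
    rw [pow_succ_comp, Measure.bind_apply .univ κ.aemeasurable, lintegral_congr fun a ↦ hκ a,
      MeasureTheory.lintegral_const, ih, pow_succ, mul_comm e, mul_right_comm]

theorem exists_isProbabilityMeasure_invariant_of_forall_le [IsMarkovKernel κ]
    [IsFiniteMeasure ρ] (h : ∀ a, ρ ≤ κ a) (hρ : ρ ≠ 0) :
    ∃ μ, IsProbabilityMeasure μ ∧ Invariant κ μ := by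
  have hρ₀ : ρ univ ≠ 0 := Measure.measure_univ_ne_zero.2 hρ
  obtain ⟨a, -⟩ := nonempty_of_measure_ne_zero hρ₀
  have hα : Nonempty α := ⟨a⟩
  set R := residual κ ρ h
  set μ : Measure α := Measure.sum fun n : ℕ ↦ (R ^ n : Kernel α α) ∘ₘ ρ with hμ
  have hμ₁ : IsProbabilityMeasure μ := by
    constructor
    rw [hμ, Measure.sum_apply _ .univ]
    have hR : ∀ a, R a univ = 1 - ρ univ := residual_apply_univ
    simp_rw [pow_comp_apply_univ hR,
      ENNReal.tsum_mul_right, ENNReal.tsum_geometric,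
      ENNReal.sub_sub_cancel ENNReal.one_ne_top (measure_univ_le_one_of_forall_le h)]
    exact ENNReal.inv_mul_cancel hρ₀ (measure_ne_top ρ univ)
  refine ⟨μ, hμ₁, ?_⟩
  calc κ ∘ₘ μ = (const α ρ + R) ∘ₘ μ := by rw [const_add_residual]
    _ = ρ + R ∘ₘ μ := by rw [Measure.add_comp, Measure.const_comp, measure_univ, one_smul]
    _ = μ := (sum_pow_comp_eq_add_comp R ρ).symm

end Iterates

end ProbabilityTheory.Kernel

/-- **Doeblin's theorem.** Under the minorization condition `P x ≥ δ • ν`, the map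
`μ ↦ P*μ = μ.bind P` is a `(1 − δ)`-contraction in total variation on probability measures,
and consequently there is a unique invariant probability measure. -/
theorem doeblin_tv_contraction_and_unique_invariant
    {X : Type*} [MeasurableSpace X]
    (P : Kernel X X) [IsMarkovKernel P]
    (δ : ℝ) (hδ : 0 < δ)
    (ν : Measure X) [IsProbabilityMeasure ν]
    (hDoeblin : ∀ x : X, ENNReal.ofReal δ • ν ≤ P x) :
    (∀ μ₁ μ₂ : Measure X, IsProbabilityMeasure μ₁ → IsProbabilityMeasure μ₂ →
        tvDist (μ₁.bind P) (μ₂.bind P) ≤ (1 - δ) * tvDist μ₁ μ₂) ∧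
    (∃! μstar : Measure X,
        IsProbabilityMeasure μstar ∧ μstar.bind P = μstar) := by
  have hδ₁ : ENNReal.ofReal δ ≤ 1 := by
    have := nonempty_of_isProbabilityMeasure ν
    simpa using Kernel.measure_univ_le_one_of_forall_le hDoeblin
  have := ν.smul_finite (ENNReal.ofReal_ne_top (r := δ))
  have hcontr (μ₁ μ₂ : Measure X) [IsProbabilityMeasure μ₁] [IsProbabilityMeasure μ₂] :
      tvDist (μ₁.bind P) (μ₂.bind P) ≤ (1 - δ) * tvDist μ₁ μ₂ := by
    simpa [ENNReal.toReal_sub_of_le hδ₁, hδ.le] using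
      Kernel.tvDist_comp_le_of_forall_le hDoeblin μ₁ μ₂
  obtain ⟨μ, hμ, hinv⟩ := Kernel.exists_isProbabilityMeasure_invariant_of_forall_le hDoeblin
    (by simp [hδ, IsProbabilityMeasure.ne_zero])
  refine ⟨fun μ₁ μ₂ _ _ ↦ hcontr μ₁ μ₂, μ, ⟨hμ, hinv⟩, fun μ' ⟨hμ', hinv'⟩ ↦ ?_⟩
  have hfix := hcontr μ' μ
  rw [hinv', hinv.def] at hfix
  exact eq_of_tvDist_eq_zero (by nlinarith [tvDist_nonneg (μ₁ := μ') (μ₂ := μ)])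
end

section
/- Let V : H → [1,∞) be continuous, r ∈ (0,1), and ρ_r, ρ = ρ₁ the weighted path metrics defined by ρ_s(x,y) = inf_γ ∫₀¹ V^s(γ(t))‖γ'(t)‖dt. Suppose V(x) ≥ V_*(‖x‖) for a strictly increasing continuous V_* : [0,∞) → [1,∞) with V_*(a) → ∞ as a → ∞. Then for every δ > 0 and K > 0, the set C = {(x,y) : ρ_r(x,y) ≥ δ and ρ(x,y) < K} is bounded: there exists R > 0 such that ‖x‖ ∨ ‖y‖ ≤ R for every (x,y) ∈ C. -/
/-- Cost of a path `γ` for the Lyapunov weight `V^r`. -/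
noncomputable def pathCost {H : Type*} [NormedAddCommGroup H] [NormedSpace ℝ H]
    (V : H → ℝ) (r : ℝ) (γ : ℝ → H) : ℝ :=
  ∫ t in (0:ℝ)..1, (V (γ t)) ^ r * ‖deriv γ t‖

/-- The weighted path (pseudo-)metric `ρ_r(x,y) = inf_γ ∫₀¹ V^r(γ(t)) ‖γ'(t)‖ dt`. -/
noncomputable def rhoDist {H : Type*} [NormedAddCommGroup H] [NormedSpace ℝ H]
    (V : H → ℝ) (r : ℝ) (x y : H) : ℝ :=
  sInf {c : ℝ | ∃ γ : ℝ → H, ContDiff ℝ 1 γ ∧ γ 0 = x ∧ γ 1 = y ∧ c = pathCost V r γ}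

/-!
A path of `ρ₁`-cost less than `K` has length less than `K`, since `V ≥ 1`, so it stays in the
ball of radius `K` around its starting point `x`. If `‖x‖` is large, `V` is at least some large
`L` on that ball, and as `r - 1 < 0` the pointwise bound `V^r ≤ L^(r-1) V` makes the `ρ_r`-cost of
the same path at most `L^(r-1) K`, which is below `δ` once `L` is large enough.
-/

open Set Filter intervalIntegral

theorem ContDiff.norm_sub_le_integral_norm_deriv {E : Type*} [NormedAddCommGroup E]
    [NormedSpace ℝ E] {γ : ℝ → E} (hγ : ContDiff ℝ 1 γ) {a b t : ℝ} (ht : t ∈ Icc a b) :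
    ‖γ t - γ a‖ ≤ ∫ s in a..b, ‖deriv γ s‖ := by
  have hγ' : Continuous fun s => ‖deriv γ s‖ := (hγ.continuous_deriv le_rfl).norm
  -- No completeness of `E` is assumed, so this goes through the mean value inequality, not FTC.
  calc ‖γ t - γ a‖ ≤ ∫ s in a..t, ‖deriv γ s‖ :=
        image_norm_le_of_norm_deriv_right_le_deriv_boundary (f := fun s => γ s - γ a)
          (hγ.continuous.sub continuous_const).continuousOn
          (fun s _ => ((hγ.differentiable one_ne_zero s).hasDerivAt.sub_const _).hasDerivWithinAt)
          (by simp)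
          (fun s => integral_hasDerivAt_right (hγ'.intervalIntegrable a s)
            (hγ'.stronglyMeasurableAtFilter _ _) hγ'.continuousAt)
          (fun _ _ => le_rfl) (right_mem_Icc.2 ht.1)
    _ ≤ ∫ s in a..b, ‖deriv γ s‖ :=
        integral_mono_interval le_rfl ht.1 ht.2 (.of_forall fun _ => norm_nonneg _)
          (hγ'.intervalIntegrable a b)

theorem Real.rpow_le_rpow_sub_one_mul {L v r : ℝ} (hL : 0 < L) (hLv : L ≤ v) (hr : r ≤ 1) :
    v ^ r ≤ L ^ (r - 1) * v := by
  have hv : 0 < v := hL.trans_le hLv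
  calc v ^ r = v ^ (r - 1) * v := by rw [← Real.rpow_add_one hv.ne', sub_add_cancel]
    _ ≤ L ^ (r - 1) * v :=
        mul_le_mul_of_nonneg_right (Real.rpow_le_rpow_of_nonpos hL hLv (by linarith)) hv.le

section WeightedPaths

variable {E : Type*} [NormedAddCommGroup E] [NormedSpace ℝ E] {V : E → ℝ}

theorem pathCost_nonneg (hV : ∀ x, 0 ≤ V x) (r : ℝ) (γ : ℝ → E) : 0 ≤ pathCost V r γ :=
  integral_nonneg zero_le_one fun _ _ => mul_nonneg (Real.rpow_nonneg (hV _) _) (norm_nonneg _)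

theorem norm_sub_le_pathCost_one (hVcont : Continuous V) (hV1 : ∀ x, 1 ≤ V x) {γ : ℝ → E}
    (hγ : ContDiff ℝ 1 γ) {t : ℝ} (ht : t ∈ Icc (0 : ℝ) 1) :
    ‖γ t - γ 0‖ ≤ pathCost V 1 γ := by
  have hγ' : Continuous fun s => ‖deriv γ s‖ := (hγ.continuous_deriv le_rfl).norm
  refine (hγ.norm_sub_le_integral_norm_deriv ht).trans ?_
  simp only [pathCost, Real.rpow_one]
  exact integral_mono_on zero_le_one (hγ'.intervalIntegrable 0 1)
    (((hVcont.comp hγ.continuous).mul hγ').intervalIntegrable 0 1)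
    fun s _ => le_mul_of_one_le_left (norm_nonneg _) (hV1 _)

theorem pathCost_le_rpow_mul_pathCost_one (hVcont : Continuous V) {γ : ℝ → E}
    (hγ : ContDiff ℝ 1 γ) {r L : ℝ} (hr : r ≤ 1) (hL : 0 < L)
    (hLV : ∀ t ∈ Icc (0 : ℝ) 1, L ≤ V (γ t)) :
    pathCost V r γ ≤ L ^ (r - 1) * pathCost V 1 γ := by
  have hVγ : Continuous fun t => V (γ t) := hVcont.comp hγ.continuous
  have hγ' : Continuous fun s => ‖deriv γ s‖ := (hγ.continuous_deriv le_rfl).norm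
  have hint : IntervalIntegrable (fun t => V (γ t) ^ r * ‖deriv γ t‖) MeasureTheory.volume 0 1 :=
    ((hVγ.continuousOn.rpow_const fun t ht =>
      Or.inl (hL.trans_le (hLV t (by simpa using ht))).ne').mul
        hγ'.continuousOn).intervalIntegrable
  simp only [pathCost, Real.rpow_one, ← integral_const_mul, ← mul_assoc]
  exact integral_mono_on zero_le_one hint
    ((continuous_const.mul hVγ |>.mul hγ').intervalIntegrable 0 1)
    fun t ht => mul_le_mul_of_nonneg_right
      (Real.rpow_le_rpow_sub_one_mul hL (hLV t ht) hr) (norm_nonneg _)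

theorem exists_pathCost_lt_of_rhoDist_lt {r K : ℝ} {x y : E} (h : rhoDist V r x y < K) :
    ∃ γ : ℝ → E, ContDiff ℝ 1 γ ∧ γ 0 = x ∧ γ 1 = y ∧ pathCost V r γ < K := by
  have hne : {c : ℝ | ∃ γ : ℝ → E, ContDiff ℝ 1 γ ∧ γ 0 = x ∧ γ 1 = y ∧
      c = pathCost V r γ}.Nonempty :=
    ⟨_, fun t : ℝ => x + t • (y - x), contDiff_const.add (contDiff_id.smul contDiff_const),
      by simp, by simp, rfl⟩
  obtain ⟨_, ⟨γ, hγ, hγ0, hγ1, rfl⟩, hlt⟩ := exists_lt_of_csInf_lt hne h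
  exact ⟨γ, hγ, hγ0, hγ1, hlt⟩

theorem rhoDist_le_pathCost (hV : ∀ x, 0 ≤ V x) (r : ℝ) {γ : ℝ → E} (hγ : ContDiff ℝ 1 γ) :
    rhoDist V r (γ 0) (γ 1) ≤ pathCost V r γ :=
  csInf_le ⟨0, by rintro _ ⟨γ, -, -, -, rfl⟩; exact pathCost_nonneg hV r γ⟩ ⟨γ, hγ, rfl, rfl, rfl⟩

theorem norm_sub_lt_of_rhoDist_one_lt (hVcont : Continuous V) (hV1 : ∀ x, 1 ≤ V x)
    {K : ℝ} {x y : E} (h : rhoDist V 1 x y < K) : ‖y - x‖ < K := by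
  obtain ⟨γ, hγ, rfl, rfl, hK⟩ := exists_pathCost_lt_of_rhoDist_lt h
  exact (norm_sub_le_pathCost_one hVcont hV1 hγ (right_mem_Icc.2 zero_le_one)).trans_lt hK

theorem rhoDist_lt_rpow_mul_of_rhoDist_one_lt (hVcont : Continuous V) (hV1 : ∀ x, 1 ≤ V x)
    {r L M K : ℝ} (hr : r ≤ 1) (hL : 0 < L) (hLV : ∀ z, M ≤ ‖z‖ → L ≤ V z) {x y : E}
    (h : rhoDist V 1 x y < K) (hx : M + K ≤ ‖x‖) :
    rhoDist V r x y < L ^ (r - 1) * K := by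
  obtain ⟨γ, hγ, rfl, rfl, hK⟩ := exists_pathCost_lt_of_rhoDist_lt h
  have hfar : ∀ t ∈ Icc (0 : ℝ) 1, L ≤ V (γ t) := fun t ht => hLV _ <| by
    linarith [norm_sub_le_pathCost_one hVcont hV1 hγ ht, norm_le_insert (γ t) (γ 0)]
  calc rhoDist V r (γ 0) (γ 1)
      ≤ pathCost V r γ := rhoDist_le_pathCost (fun z => zero_le_one.trans (hV1 z)) r hγ
    _ ≤ L ^ (r - 1) * pathCost V 1 γ := pathCost_le_rpow_mul_pathCost_one hVcont hγ hr hL hfar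
    _ < L ^ (r - 1) * K := by gcongr

end WeightedPaths

theorem bounded_region_of_rho_bounds_general
    {H : Type*} [NormedAddCommGroup H] [NormedSpace ℝ H]
    (V : H → ℝ) (hVcont : Continuous V) (hV1 : ∀ x, 1 ≤ V x)
    (Vlow : ℝ → ℝ)
    (hVlowtop : Filter.Tendsto Vlow Filter.atTop Filter.atTop)
    (hlow : ∀ x : H, Vlow ‖x‖ ≤ V x)
    (r : ℝ) (hr : r ∈ Set.Ioo (0 : ℝ) 1)
    (δ K : ℝ) (hδ : 0 < δ) :
    ∃ R : ℝ, 0 < R ∧ ∀ x y : H,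
      δ ≤ rhoDist V r x y → rhoDist V 1 x y < K → ‖x‖ ≤ R ∧ ‖y‖ ≤ R := by
  have hsmall : Tendsto (fun L : ℝ => L ^ (r - 1) * K) atTop (nhds 0) := by
    simpa using ((tendsto_rpow_neg_atTop (y := 1 - r) (by linarith [hr.2])).mul_const K).congr
      fun L => by rw [neg_sub]
  obtain ⟨L, hL, hLK⟩ := ((eventually_gt_atTop 0).and (hsmall.eventually_lt_const hδ)).exists
  obtain ⟨M, hM⟩ := eventually_atTop.1 (hVlowtop.eventually_ge_atTop L)
  refine ⟨max (M + 2 * K) 1, lt_max_of_lt_right one_pos, fun x y hδr hK => ?_⟩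
  have hyx : ‖y - x‖ < K := norm_sub_lt_of_rhoDist_one_lt hVcont hV1 hK
  have hx : ‖x‖ < M + K := not_le.1 fun hx => (hδr.trans_lt
    (rhoDist_lt_rpow_mul_of_rhoDist_one_lt hVcont hV1 hr.2.le hL
      (fun z hz => (hM _ hz).trans (hlow z)) hK hx)).not_gt hLK
  constructor <;> linarith [norm_le_insert' y x, norm_nonneg (y - x), le_max_left (M + 2 * K) 1]

/-- **Lemma 3.11.** If `V(x) ≥ V_*(‖x‖)` with `V_*` strictly increasing, continuous and
tending to infinity, and `r ∈ (0,1)`, then `{(x,y) : ρ_r(x,y) ≥ δ, ρ(x,y) < K}` is a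
bounded set. -/
theorem bounded_region_of_rho_bounds
    {H : Type*} [NormedAddCommGroup H] [NormedSpace ℝ H]
    (V : H → ℝ) (hVcont : Continuous V) (hV1 : ∀ x, 1 ≤ V x)
    (Vlow : ℝ → ℝ) (hVlowmono : StrictMono Vlow) (hVlowcont : Continuous Vlow)
    (hVlow1 : ∀ a : ℝ, 0 ≤ a → 1 ≤ Vlow a)
    (hVlowtop : Filter.Tendsto Vlow Filter.atTop Filter.atTop)
    (hlow : ∀ x : H, Vlow ‖x‖ ≤ V x)
    (r : ℝ) (hr : r ∈ Set.Ioo (0 : ℝ) 1)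
    (δ K : ℝ) (hδ : 0 < δ) (hK : 0 < K) :
    ∃ R : ℝ, 0 < R ∧ ∀ x y : H,
      δ ≤ rhoDist V r x y → rhoDist V 1 x y < K → ‖x‖ ≤ R ∧ ‖y‖ ≤ R :=
  bounded_region_of_rho_bounds_general V hVcont hV1 Vlow hVlowtop hlow r hr δ K hδ
end
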